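/- Define C_0 to be the class of rooted caterpillars (rooted trees having a root-to-leaf path P such that all vertices outside P are leaves), and for p ≥ 1 let C_p be the class of trees obtained by identifying the roots of trees from C_{p-1} with distinct leaves of a tree from C_0. Then every rooted tree with at most n leaves, in which each non-root internal vertex has at least two children, belongs to C_{⌊log₂ n⌋}. -/

import Mathlib

/-- A finite rooted tree: a node together with the list of subtrees of its children. -/
inductive RTree : Type
  | node : List RTree → RTree

namespace RTree

/-- A rooted caterpillar: there is a root-to-leaf path `P` such that every vertex
outside `P` is a leaf.  Equivalently, at every node of the path all children off
the path are leaves. -/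
inductive IsCaterpillar : RTree → Prop
  | leaf : IsCaterpillar (.node [])
  | cons {pre post : List RTree} {t : RTree} :
      IsCaterpillar t → (∀ s ∈ pre ++ post, s = RTree.node []) →
      IsCaterpillar (.node (pre ++ t :: post))

mutual
  /-- Number of leaves of a rooted tree. -/
  def numLeaves : RTree → ℕ
    | .node [] => 1
    | .node (t :: ts) => t.numLeaves + numLeavesList ts
  def numLeavesList : List RTree → ℕ
    | [] => 0
    | t :: ts => t.numLeaves + numLeavesList ts
end

/-- Every internal (non-leaf) vertex has at least two children. -/
inductive Good : RTree → Prop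
  | mk {ts : List RTree} : (ts = [] ∨ 2 ≤ ts.length) → (∀ t ∈ ts, Good t) →
      Good (.node ts)

/-- Every non-root internal vertex has at least two children. -/
def GoodNonRoot : RTree → Prop
  | .node ts => ∀ t ∈ ts, Good t

/-- `Attach Q T₀ T` : `T` is obtained from `T₀` by identifying the roots of some
trees satisfying `Q` with distinct leaves of `T₀` (each leaf of `T₀` is either
kept as a leaf or replaced by a tree satisfying `Q`). -/
inductive Attach (Q : RTree → Prop) : RTree → RTree → Prop
  | keep : Attach Q (.node []) (.node [])
  | graft {t : RTree} : Q t → Attach Q (.node []) t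
  | node {ts ts' : List RTree} : ts ≠ [] → List.Forall₂ (Attach Q) ts ts' →
      Attach Q (.node ts) (.node ts')

/-- The classes `C_p`: `C_0` are the caterpillars, and `C_p` consists of trees
obtained by adding trees from `C_{p-1}` to (distinct leaves of) a caterpillar. -/
def InC : ℕ → RTree → Prop
  | 0 => IsCaterpillar
  | p + 1 => fun T => ∃ T₀ : RTree, IsCaterpillar T₀ ∧ Attach (InC p) T₀ T

/- ---------- auxiliary lemmas ---------- -/

theorem one_le_numLeaves : ∀ T : RTree, 1 ≤ T.numLeaves
  | .node [] => le_refl 1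
  | .node (t :: _) => le_trans (one_le_numLeaves t) (by simp [numLeaves])

theorem numLeavesList_append (l1 l2 : List RTree) :
    numLeavesList (l1 ++ l2) = numLeavesList l1 + numLeavesList l2 := by
  induction l1 with
  | nil => simp [numLeavesList]
  | cons a l ih => simp [numLeavesList, ih]; omega

theorem numLeaves_node_cons (t : RTree) (ts : List RTree) :
    numLeaves (.node (t :: ts)) = numLeavesList (t :: ts) := by
  simp [numLeaves, numLeavesList]

theorem le_numLeavesList_of_mem {s : RTree} {l : List RTree} (h : s ∈ l) :
    s.numLeaves ≤ numLeavesList l := by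
  induction l with
  | nil => simp at h
  | cons a l ih =>
    rcases List.mem_cons.1 h with rfl | h
    · simp [numLeavesList]
    · have := ih h; simp [numLeavesList]; omega

theorem exists_max (ts : List RTree) (h : ts ≠ []) :
    ∃ t ∈ ts, ∀ s ∈ ts, s.numLeaves ≤ t.numLeaves := by
  induction ts with
  | nil => simp at h
  | cons a l ih =>
    rcases eq_or_ne l [] with rfl | hl
    · exact ⟨a, by simp, by simp⟩
    · obtain ⟨t, ht, hmax⟩ := ih hl
      rcases le_total a.numLeaves t.numLeaves with h1 | h1
      · refine ⟨t, List.mem_cons_of_mem _ ht, ?_⟩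
        intro s hs
        rcases List.mem_cons.1 hs with rfl | hs
        · exact h1
        · exact hmax s hs
      · refine ⟨a, List.mem_cons_self, ?_⟩
        intro s hs
        rcases List.mem_cons.1 hs with rfl | hs
        · exact le_refl _
        · exact le_trans (hmax s hs) h1

theorem good_eq_leaf {t : RTree} (hg : Good t) (h1 : t.numLeaves = 1) :
    t = .node [] := by
  cases hg with
  | @mk ts h2 _ =>
    rcases h2 with rfl | h2
    · rfl
    · exfalso
      match ts, h2 with
      | a :: b :: ts', _ =>
        have ha := one_le_numLeaves a
        have hb := one_le_numLeaves b
        have : numLeaves (.node (a :: b :: ts')) =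
            a.numLeaves + (b.numLeaves + numLeavesList ts') := by
          simp [numLeaves, numLeavesList]
        omega

theorem goodNonRoot_of_good {t : RTree} (hg : Good t) : GoodNonRoot t := by
  cases hg with
  | mk _ h => exact h

theorem forall₂_graft {Q : RTree → Prop} (l : List RTree) (h : ∀ s ∈ l, Q s) :
    List.Forall₂ (Attach Q) (l.map fun _ => RTree.node []) l := by
  induction l with
  | nil => simp
  | cons a l ih =>
    simp only [List.map_cons]
    exact List.Forall₂.cons (Attach.graft (h a (by simp)))
      (ih fun s hs => h s (by simp [hs]))

theorem sizeOf_pos (T : RTree) : 0 < sizeOf T := by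
  cases T with
  | node ts => simp

/-- key step: for `n ≥ 2`, assuming the main statement for all smaller `m`,
every good tree with at most `n` leaves decomposes as a caterpillar with
trees from `C_{log n - 1}` attached. -/
theorem attachAux (n : ℕ) (hn : 2 ≤ n)
    (hM : ∀ m, 1 ≤ m → m < n → ∀ S : RTree, S.GoodNonRoot → S.numLeaves ≤ m →
      InC (Nat.log 2 m) S) :
    ∀ k (T : RTree), sizeOf T ≤ k → T.GoodNonRoot → T.numLeaves ≤ n →
      ∃ T₀, IsCaterpillar T₀ ∧ Attach (InC (Nat.log 2 n - 1)) T₀ T := by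
  intro k
  induction k with
  | zero => intro T hk; exact absurd hk (by have := sizeOf_pos T; omega)
  | succ k ih =>
    rintro ⟨ts⟩ hk hgood hleaves
    rcases eq_or_ne ts [] with rfl | hne
    · exact ⟨.node [], IsCaterpillar.leaf, Attach.keep⟩
    · obtain ⟨t, ht, hmax⟩ := exists_max ts hne
      obtain ⟨pre, post, rfl⟩ := List.append_of_mem ht
      -- bound on sizeOf
      have hsz : sizeOf t ≤ k := by
        have h1 : sizeOf t < sizeOf (pre ++ t :: post) :=
          List.sizeOf_lt_of_mem ht
        have h2 : sizeOf (RTree.node (pre ++ t :: post)) =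
            1 + sizeOf (pre ++ t :: post) := by simp
        omega
      -- leaves bookkeeping
      have hsum : numLeaves (.node (pre ++ t :: post)) =
          numLeavesList pre + t.numLeaves + numLeavesList post := by
        match pre with
        | [] => simp [numLeaves, numLeavesList]
        | a :: pre' =>
          rw [List.cons_append, numLeaves_node_cons]
          show numLeavesList ((a :: pre') ++ t :: post) = _
          rw [numLeavesList_append]
          simp [numLeavesList]; omega
      -- off-path subtrees are in C_{log n - 1}
      have hoff : ∀ s ∈ pre ++ post, InC (Nat.log 2 n - 1) s := by
        intro s hs
        have hsmem : s ∈ pre ++ t :: post := by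
          rcases List.mem_append.1 hs with h | h
          · exact List.mem_append.2 (Or.inl h)
          · exact List.mem_append.2 (Or.inr (List.mem_cons_of_mem _ h))
        have hsl : s.numLeaves ≤ numLeavesList pre + numLeavesList post := by
          rcases List.mem_append.1 hs with h | h
          · have := le_numLeavesList_of_mem h; omega
          · have := le_numLeavesList_of_mem h; omega
        have h2s : 2 * s.numLeaves ≤ n := by
          have := hmax s hsmem
          omega
        have hs2 : s.numLeaves ≤ n / 2 := by
          rw [Nat.le_div_iff_mul_le (by norm_num)]; omega
        have h1 : 1 ≤ n / 2 := by
          rw [Nat.le_div_iff_mul_le (by norm_num)]; omega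
        have hlt : n / 2 < n := Nat.div_lt_self (by omega) (by norm_num)
        have hgs : s.GoodNonRoot := goodNonRoot_of_good (hgood s hsmem)
        have := hM (n / 2) h1 hlt s hgs hs2
        rwa [Nat.log_div_base] at this
      -- recurse on the heavy child
      have hgt : t.GoodNonRoot := goodNonRoot_of_good (hgood t ht)
      have hlt : t.numLeaves ≤ n := by omega
      obtain ⟨T₀', cat', att'⟩ := ih t hsz hgt hlt
      refine ⟨.node ((pre.map fun _ => RTree.node []) ++ T₀' ::
        (post.map fun _ => RTree.node [])), ?_, ?_⟩
      · refine IsCaterpillar.cons cat' ?_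
        intro s hs
        rcases List.mem_append.1 hs with h | h <;>
          · obtain ⟨x, _, rfl⟩ := List.mem_map.1 h; rfl
      · refine Attach.node (by simp) ?_
        refine List.rel_append ?_ (List.Forall₂.cons att' ?_)
        · exact forall₂_graft pre fun s hs => hoff s (by simp [hs])
        · exact forall₂_graft post fun s hs => hoff s (by simp [hs])

theorem numLeavesList_eq_zero {l : List RTree} (h : numLeavesList l = 0) :
    l = [] := by
  cases l with
  | nil => rfl
  | cons a l => exfalso; have := one_le_numLeaves a; simp [numLeavesList] at h; omega

theorem main : ∀ n, 1 ≤ n → ∀ T : RTree, T.GoodNonRoot → T.numLeaves ≤ n →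
    InC (Nat.log 2 n) T := by
  intro n
  induction n using Nat.strong_induction_on with
  | _ n ih =>
    intro hn T hgood hleaves
    rcases lt_or_ge n 2 with h2 | h2
    · -- n = 1
      interval_cases n
      have h1 : T.numLeaves = 1 :=
        le_antisymm hleaves (one_le_numLeaves T)
      rw [show Nat.log 2 1 = 0 from Nat.log_one_right 2]
      show IsCaterpillar T
      match T with
      | .node [] => exact IsCaterpillar.leaf
      | .node (t :: ts) =>
        have hts : t.numLeaves + numLeavesList ts = 1 := h1
        have h1t := one_le_numLeaves t
        have hts0 : ts = [] := numLeavesList_eq_zero (by omega)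
        subst hts0
        have : t = .node [] := good_eq_leaf (hgood t (by simp)) (by omega)
        subst this
        exact IsCaterpillar.cons (pre := []) (post := [])
          IsCaterpillar.leaf (by simp)
    · obtain ⟨T₀, cat, att⟩ :=
        attachAux n h2 (fun m h1 hlt => ih m hlt h1) (sizeOf T) T le_rfl hgood hleaves
      have hpos : 0 < Nat.log 2 n := Nat.log_pos (by norm_num) h2
      rw [show Nat.log 2 n = (Nat.log 2 n - 1) + 1 by omega]
      exact ⟨T₀, cat, att⟩

end RTree

/-- Every rooted tree with at most `n` leaves, in which each
non-root internal vertex has at least two children, belongs to `C_{⌊log₂ n⌋}`. -/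
theorem stmt2 (n : ℕ) (hn : 1 ≤ n) (T : RTree)
    (hgood : T.GoodNonRoot) (hleaves : T.numLeaves ≤ n) :
    RTree.InC (Nat.log 2 n) T := by
  exact RTree.main n hn T hgood hleaves
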